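/- Suppose at time $t^-$ the follower in the target lane has local density $\rho^- \in (0, 1/2)$ and the changing vehicle has current-lane density $\rho_j \in (0,1]$, with $\lambda = 1 - \rho_j$ and insertion at the convex-combination position. Then the new density $\rho^+ = \rho^- + A(\rho_j, \rho^-)\rho^-$ satisfies $\rho^- < \rho^+ = \rho^- /((1-\rho_j)(1-\rho^-) + \rho_j\rho^-) \le 1$, i.e. the post-change density strictly increases but does not exceed the maximum density. -/

import Mathlib

/-! The denominator `(1 - ρj) * (1 - ρm) + ρj * ρm` is a convex combination of `1 - ρm` and `ρm`.
For `0 < ρm < 1/2` it therefore lies in `[ρm, 1 - ρm] ⊆ [ρm, 1)`, so `ρm / D` is strictly above `ρm`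
and at most `1`. -/

lemma le_convex_mix_of_le_half {t x : ℝ} (ht : t ∈ Set.Icc (0 : ℝ) 1) (hx : x ≤ 1 / 2) :
    x ≤ (1 - t) * (1 - x) + t * x := by
  have hmin : min (1 - x) x = x := min_eq_right (by linarith)
  simpa only [hmin, smul_eq_mul] using
    Convex.min_le_combo (1 - x) x (sub_nonneg.2 ht.2) ht.1 (sub_add_cancel 1 t)

lemma convex_mix_lt_one {t x : ℝ} (ht : t ∈ Set.Icc (0 : ℝ) 1) (hx : x ∈ Set.Ioo (0 : ℝ) 1) :
    (1 - t) * (1 - x) + t * x < 1 := by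
  have hmax : max (1 - x) x < 1 := max_lt (by linarith [hx.1]) hx.2
  refine lt_of_le_of_lt ?_ hmax
  simpa only [smul_eq_mul] using
    Convex.combo_le_max (1 - x) x (sub_nonneg.2 ht.2) ht.1 (sub_add_cancel 1 t)

theorem post_change_density_bounds (ρj ρm : ℝ)
    (hρj : ρj ∈ Set.Ioc (0:ℝ) 1) (hρm : ρm ∈ Set.Ioo (0:ℝ) (1/2)) :
    let A : ℝ := ((1 - ρj) + (2 * ρj - 1) * ρm)⁻¹ - 1
    let ρp : ℝ := ρm + A * ρm
    ρm < ρp ∧ ρp = ρm / ((1 - ρj) * (1 - ρm) + ρj * ρm) ∧ ρp ≤ 1 := by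
  intro A ρp
  have hj : ρj ∈ Set.Icc (0 : ℝ) 1 := Set.Ioc_subset_Icc_self hρj
  have hmix : (1 - ρj) + (2 * ρj - 1) * ρm = (1 - ρj) * (1 - ρm) + ρj * ρm := by ring
  set D := (1 - ρj) * (1 - ρm) + ρj * ρm
  have hρp : ρp = ρm / D := by simp only [ρp, A, hmix]; ring
  have hD_ge : ρm ≤ D := le_convex_mix_of_le_half hj hρm.2.le
  have hD_lt : D < 1 := convex_mix_lt_one hj ⟨hρm.1, by linarith [hρm.2]⟩
  have hD_pos : 0 < D := hρm.1.trans_le hD_ge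
  refine ⟨?_, hρp, ?_⟩
  · rw [hρp, lt_div_iff₀ hD_pos]
    exact mul_lt_of_lt_one_right hρm.1 hD_lt
  · rw [hρp, div_le_one₀ hD_pos]
    exact hD_ge
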